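/- Let G = X·(I_t | B) where X is a k×t matrix over a field, I_t the t×t identity, B a t×m matrix, and suppose every t columns of G are linearly independent (so rank G = t). Then every square submatrix of B is invertible. -/

import Mathlib

/-! A singular minor of `B` on rows `I` and columns `J` has a kernel vector `v`; extending it by
zero to `u`, the vector `(-(B u), u)` lies in the kernel of `(1 | B)`, hence of `G = X (1 | B)`.
Its first block vanishes on `I`, so it is supported on at most `(t - |I|) + |J| = t` columns of `G`,
which are linearly independent: so it is zero, contradicting `v ≠ 0`. -/

open Finset Matrix

namespace Matrix

theorem eq_zero_of_mulVec_eq_zero_of_support_subset {F ι κ : Type*} [Field F] [Fintype κ]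
    {G : Matrix ι κ F} {t : ℕ}
    (ht : t ≤ Fintype.card κ)
    (hcols : ∀ f : Fin t → κ, Function.Injective f → LinearIndependent F (fun i => Gᵀ (f i)))
    {w : κ → F} (hw : G *ᵥ w = 0) {s₀ : Finset κ} (hs₀ : #s₀ ≤ t)
    (hw₀ : ∀ c ∉ s₀, w c = 0) : w = 0 := by
  obtain ⟨s, hs₀s, hs⟩ := exists_superset_card_eq hs₀ ht
  have hws : ∀ c ∉ s, w c = 0 := fun c hc => hw₀ c (mt (@hs₀s c) hc)
  let e : Fin t ≃ s := (s.equivFin.trans (finCongr hs)).symm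
  have hli : LinearIndependent F (fun c : s => Gᵀ c) := by
    simpa [Function.comp_def] using
      (hcols _ (Subtype.val_injective.comp e.injective)).comp e.symm e.symm.injective
  have hsum : ∑ c : s, w c • Gᵀ c = 0 := by
    rw [sum_coe_sort s (fun c => w c • Gᵀ c), sum_subset (subset_univ s), ← hw, mulVec_eq_sum]
    · simp
    · intro c _ hc
      simp [hws c hc]
  funext c
  by_cases hc : c ∈ s
  · exact Fintype.linearIndependent_iff.mp hli (fun c => w c) hsum ⟨c, hc⟩
  · exact hws c hc

theorem mulVec_extend_zero {R n m ι : Type*} [NonUnitalNonAssocSemiring R] [Fintype m] [Fintype ι]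
    (B : Matrix n m R) {cols : ι → m} (hcols : Function.Injective cols) (v : ι → R) :
    B *ᵥ Function.extend cols v 0 = B.submatrix id cols *ᵥ v := by
  funext r
  refine (Fintype.sum_of_injective cols hcols _ _ (fun j hj => ?_) fun i => ?_).symm
  · simp [Function.extend_apply' _ _ _ (by simpa using hj)]
  · simp [hcols.extend_apply]

theorem fromCols_one_mulVec_elim_neg_mulVec {R n m : Type*} [CommRing R] [Fintype n] [Fintype m]
    [DecidableEq n] (B : Matrix n m R) (u : m → R) :
    fromCols 1 B *ᵥ Sum.elim (-(B *ᵥ u)) u = 0 := by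
  simp [fromCols_mulVec]

theorem exists_mulVec_fromCols_one_eq_zero_of_det_submatrix_eq_zero {F n m ι : Type*} [Field F]
    [Fintype n] [Fintype m] [Fintype ι] [DecidableEq n] [DecidableEq m] [DecidableEq ι]
    (B : Matrix n m F) {rows : ι → n} {cols : ι → m}
    (hrows : Function.Injective rows) (hcols : Function.Injective cols)
    (hdet : (B.submatrix rows cols).det = 0) :
    ∃ w ≠ 0, fromCols 1 B *ᵥ w = 0 ∧
      ∃ s : Finset (n ⊕ m), #s ≤ Fintype.card n ∧ ∀ c ∉ s, w c = 0 := by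
  obtain ⟨v, hv0, hv⟩ := exists_mulVec_eq_zero_iff.mpr hdet
  set u := Function.extend cols v 0
  have hu : ∀ i, u (cols i) = v i := hcols.extend_apply v 0
  have hBu : ∀ i, (B *ᵥ u) (rows i) = 0 := fun i => by
    rw [mulVec_extend_zero B hcols]
    exact congrFun hv i
  refine ⟨Sum.elim (-(B *ᵥ u)) u, fun h => hv0 (funext fun i => ?_),
    fromCols_one_mulVec_elim_neg_mulVec B u, (univ.image rows)ᶜ.disjSum (univ.image cols), ?_, ?_⟩
  · simpa [hu] using congrFun h (Sum.inr (cols i))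
  · have := Fintype.card_le_of_injective rows hrows
    simp only [card_disjSum, card_compl, card_image_of_injective _ hrows, card_univ,
      card_image_of_injective _ hcols]
    omega
  · rintro (r | j) hc
    · obtain ⟨i, rfl⟩ : r ∈ Set.range rows := by simpa using hc
      simp [hBu]
    · exact Function.extend_apply' _ _ _ (by simpa using hc)

end Matrix

theorem stmt_10 (F : Type) [Field F] (k t m : ℕ)
    (X : Matrix (Fin k) (Fin t) F) (B : Matrix (Fin t) (Fin m) F)
    (G : Matrix (Fin k) (Fin t ⊕ Fin m) F)
    (hG : G = X * Matrix.fromCols 1 B)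
    (hcols : ∀ f : Fin t → (Fin t ⊕ Fin m), Function.Injective f →
      LinearIndependent F (fun i => G.transpose (f i))) :
    ∀ (l : ℕ) (rows : Fin l → Fin t) (cols : Fin l → Fin m),
      Function.Injective rows → Function.Injective cols →
      (B.submatrix rows cols).det ≠ 0 := by
  intro l rows cols hrows hcols_inj hdet
  obtain ⟨w, hw0, hBw, s, hs, hws⟩ :=
    B.exists_mulVec_fromCols_one_eq_zero_of_det_submatrix_eq_zero hrows hcols_inj hdet
  have hGw : G *ᵥ w = 0 := by rw [hG, ← mulVec_mulVec, hBw, mulVec_zero]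
  exact hw0 (eq_zero_of_mulVec_eq_zero_of_support_subset (by simp) hcols hGw
    (by simpa using hs) hws)
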